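/- arXiv:1804.02605 — 5 statements merged into one kernel-verified Lean document; each statement's English description precedes it below -/
import Mathlib

section
/- Fix α > 0 and L > 0. Define φ_{α,L} : [0,∞) → [0,∞) by φ_{α,L}(x) = exp(min{x², (x/L)^α}) − 1. Then for any real-valued random variable X, ‖X‖_{Ψ_{α,L}} ≤ ‖X‖_{φ_{α,L}} ≤ 2‖X‖_{Ψ_{α,L}}. -/
open MeasureTheory ProbabilityTheory ENNReal

noncomputable section

/-- The `g`-Orlicz norm of a real-valued random variable:
`‖X‖_g := inf {η > 0 : E[g(|X|/η)] ≤ 1}`, with `inf ∅ = ∞`. -/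
def orliczNorm {Ω : Type*} [MeasurableSpace Ω] (μ : Measure Ω) (g : ℝ → ℝ) (X : Ω → ℝ) : ℝ≥0∞ :=
  sInf (ENNReal.ofReal '' {η : ℝ | 0 < η ∧ ∫⁻ ω, ENNReal.ofReal (g (|X ω| / η)) ∂μ ≤ 1})

/-- The inverse of the Generalized Bernstein-Orlicz function:
`Ψ_{α,L}⁻¹(t) = √(log(1+t)) + L (log(1+t))^{1/α}`. -/
def PsiInv (α L t : ℝ) : ℝ :=
  Real.sqrt (Real.log (1 + t)) + L * Real.log (1 + t) ^ (1 / α)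

/-- The Generalized Bernstein-Orlicz function `Ψ_{α,L}`: the non-decreasing function with
`Ψ_{α,L}(0) = 0` whose inverse is `PsiInv α L`. -/
def Psi (α L x : ℝ) : ℝ := sInf {t : ℝ | 0 ≤ t ∧ x ≤ PsiInv α L t}

/-- The Generalized Bernstein-Orlicz (GBO) norm `‖X‖_{Ψ_{α,L}}`. -/
def gboNorm {Ω : Type*} [MeasurableSpace Ω] (μ : Measure Ω) (α L : ℝ) (X : Ω → ℝ) : ℝ≥0∞ :=
  orliczNorm μ (Psi α L) X

/-- The `ψ_α`-Orlicz norm `‖X‖_{ψ_α} := inf {η > 0 : E[exp((|X|/η)^α)] ≤ 2}`,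
with `inf ∅ = ∞`. -/
def psiNorm {Ω : Type*} [MeasurableSpace Ω] (μ : Measure Ω) (α : ℝ) (X : Ω → ℝ) : ℝ≥0∞ :=
  sInf (ENNReal.ofReal ''
    {η : ℝ | 0 < η ∧ ∫⁻ ω, ENNReal.ofReal (Real.exp ((|X ω| / η) ^ α)) ∂μ ≤ 2})

end

/-!
Both inequalities are pointwise comparisons of the Young functions. With `m = log (1 + t)`,
`Ψ_{α,L}⁻¹(t) = √m + L m^{1/α}`. At `t = φ_{α,L}(x)` one of the two summands equals `x`, so
`Ψ_{α,L} ≤ φ_{α,L}`. Conversely, if `y ≤ √m + L m^{1/α}` then `y / 2` is at most the larger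
summand, which forces `min ((y/2)², (y/2/L)^α) ≤ m`, i.e. `φ_{α,L}(y / 2) ≤ t`; hence
`φ_{α,L}(y / 2) ≤ Ψ_{α,L}(y)`, which doubles the norm at most.
-/

noncomputable def phiGBO (α L x : ℝ) : ℝ := Real.exp (min (x ^ 2) ((x / L) ^ α)) - 1

section Orlicz

variable {Ω : Type*} [MeasurableSpace Ω] (μ : Measure Ω) (X : Ω → ℝ)

theorem orliczNorm_mono {g h : ℝ → ℝ} (hgh : ∀ x, 0 ≤ x → g x ≤ h x) :
    orliczNorm μ g X ≤ orliczNorm μ h X := by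
  refine sInf_le_sInf (Set.image_mono ?_)
  rintro η ⟨hη, hint⟩
  refine ⟨hη, le_trans (lintegral_mono fun ω => ?_) hint⟩
  exact ENNReal.ofReal_le_ofReal (hgh _ (div_nonneg (abs_nonneg _) hη.le))

theorem orliczNorm_le_ofReal_mul {g h : ℝ → ℝ} {c : ℝ} (hc : 0 < c)
    (hgh : ∀ x, 0 ≤ x → h (x / c) ≤ g x) :
    orliczNorm μ h X ≤ ENNReal.ofReal c * orliczNorm μ g X := by
  have hc₀ : ENNReal.ofReal c ≠ 0 := by simpa using hc
  rw [mul_comm, ← ENNReal.div_le_iff_le_mul (Or.inl hc₀) (Or.inl ofReal_ne_top)]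
  refine le_sInf ?_
  rintro _ ⟨η, ⟨hη, hint⟩, rfl⟩
  have hcη : c * η ∈ {η : ℝ | 0 < η ∧ ∫⁻ ω, ENNReal.ofReal (h (|X ω| / η)) ∂μ ≤ 1} := by
    refine ⟨mul_pos hc hη, le_trans (lintegral_mono fun ω => ?_) hint⟩
    rw [mul_comm, ← div_div]
    exact ENNReal.ofReal_le_ofReal (hgh _ (div_nonneg (abs_nonneg _) hη.le))
  rw [ENNReal.div_le_iff_le_mul (Or.inl hc₀) (Or.inl ofReal_ne_top), mul_comm,
    ← ENNReal.ofReal_mul hc.le]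
  exact sInf_le ⟨c * η, hcη, rfl⟩

end Orlicz

section Young

variable {α L : ℝ}

theorem PsiInv_exp_sub_one (m : ℝ) :
    PsiInv α L (Real.exp m - 1) = Real.sqrt m + L * m ^ (1 / α) := by
  rw [PsiInv, add_sub_cancel, Real.log_exp]

theorem Psi_le_of_le_PsiInv {x t : ℝ} (ht : 0 ≤ t) (hx : x ≤ PsiInv α L t) : Psi α L x ≤ t :=
  csInf_le ⟨0, fun _ hs => hs.1⟩ ⟨ht, hx⟩

theorem le_Psi_of_forall_le (hL : 0 ≤ L) {x s : ℝ} (hx : 0 ≤ x)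
    (hs : ∀ t, 0 ≤ t → x ≤ PsiInv α L t → s ≤ t) : s ≤ Psi α L x := by
  refine le_csInf ⟨Real.exp (x ^ 2) - 1, sub_nonneg.mpr (Real.one_le_exp (sq_nonneg x)), ?_⟩
    fun t ht => hs t ht.1 ht.2
  rw [PsiInv_exp_sub_one, Real.sqrt_sq hx]
  exact le_add_of_nonneg_right (mul_nonneg hL (Real.rpow_nonneg (sq_nonneg x) _))

theorem le_sqrt_min_add_mul_rpow_min (hα : 0 < α) (hL : 0 < L) {x : ℝ} (hx : 0 ≤ x) :
    x ≤ Real.sqrt (min (x ^ 2) ((x / L) ^ α)) +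
      L * min (x ^ 2) ((x / L) ^ α) ^ (1 / α) := by
  have hxL : 0 ≤ x / L := div_nonneg hx hL.le
  rcases min_cases (x ^ 2) ((x / L) ^ α) with ⟨he, _⟩ | ⟨he, _⟩
  · rw [he, Real.sqrt_sq hx]
    exact le_add_of_nonneg_right (mul_nonneg hL.le (Real.rpow_nonneg (sq_nonneg x) _))
  · rw [he, ← Real.rpow_mul hxL, mul_one_div_cancel hα.ne', Real.rpow_one,
      mul_div_cancel₀ _ hL.ne']
    exact le_add_of_nonneg_left (Real.sqrt_nonneg _)

theorem min_sq_rpow_le_of_le_sqrt_add (hα : 0 < α) (hL : 0 < L) {y m : ℝ} (hy : 0 ≤ y)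
    (hm : 0 ≤ m) (hym : y ≤ Real.sqrt m + L * m ^ (1 / α)) :
    min ((y / 2) ^ 2) ((y / 2 / L) ^ α) ≤ m := by
  rcases le_total (L * m ^ (1 / α)) (Real.sqrt m) with h | h
  · have hy₂ : y / 2 ≤ Real.sqrt m := by linarith
    calc min ((y / 2) ^ 2) ((y / 2 / L) ^ α) ≤ (y / 2) ^ 2 := min_le_left _ _
      _ ≤ Real.sqrt m ^ 2 := pow_le_pow_left₀ (by linarith) hy₂ 2
      _ = m := Real.sq_sqrt hm
  · have hy₂ : y / 2 / L ≤ m ^ (1 / α) := by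
      rw [div_le_iff₀ hL]
      linarith
    calc min ((y / 2) ^ 2) ((y / 2 / L) ^ α) ≤ (y / 2 / L) ^ α := min_le_right _ _
      _ ≤ (m ^ (1 / α)) ^ α := Real.rpow_le_rpow (by positivity) hy₂ hα.le
      _ = m := by rw [← Real.rpow_mul hm, one_div_mul_cancel hα.ne', Real.rpow_one]

theorem Psi_le_phiGBO (hα : 0 < α) (hL : 0 < L) {x : ℝ} (hx : 0 ≤ x) :
    Psi α L x ≤ phiGBO α L x := by
  have hm : 0 ≤ min (x ^ 2) ((x / L) ^ α) :=
    le_min (sq_nonneg x) (Real.rpow_nonneg (div_nonneg hx hL.le) α)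
  refine Psi_le_of_le_PsiInv (sub_nonneg.mpr (Real.one_le_exp hm)) ?_
  rw [phiGBO, PsiInv_exp_sub_one]
  exact le_sqrt_min_add_mul_rpow_min hα hL hx

theorem phiGBO_half_le_Psi (hα : 0 < α) (hL : 0 < L) {y : ℝ} (hy : 0 ≤ y) :
    phiGBO α L (y / 2) ≤ Psi α L y := by
  refine le_Psi_of_forall_le hL.le hy fun t ht hyt => ?_
  have h1t : 0 < 1 + t := by linarith
  rw [PsiInv] at hyt
  have key := min_sq_rpow_le_of_le_sqrt_add hα hL hy (Real.log_nonneg (by linarith)) hyt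
  rw [phiGBO, sub_le_iff_le_add', ← Real.exp_log h1t]
  exact Real.exp_le_exp.mpr key

end Young

theorem gbo_equiv_phi_general {Ω : Type*} [MeasurableSpace Ω] (μ : Measure Ω)
    (α L : ℝ) (hα : 0 < α) (hL : 0 < L) (X : Ω → ℝ) :
    gboNorm μ α L X ≤
        orliczNorm μ (fun x => Real.exp (min (x ^ 2) ((x / L) ^ α)) - 1) X ∧
      orliczNorm μ (fun x => Real.exp (min (x ^ 2) ((x / L) ^ α)) - 1) X ≤
        2 * gboNorm μ α L X := by
  refine ⟨orliczNorm_mono μ X fun x hx => Psi_le_phiGBO hα hL hx, ?_⟩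
  have h := orliczNorm_le_ofReal_mul μ X two_pos fun y hy => phiGBO_half_le_Psi hα hL hy
  rwa [ENNReal.ofReal_ofNat] at h

/-- For `α, L > 0` and `φ_{α,L}(x) = exp(min{x², (x/L)^α}) − 1`,
`‖X‖_{Ψ_{α,L}} ≤ ‖X‖_{φ_{α,L}} ≤ 2 ‖X‖_{Ψ_{α,L}}` for any random variable `X`. -/
theorem gbo_equiv_phi {Ω : Type*} [MeasurableSpace Ω] (μ : Measure Ω) [IsProbabilityMeasure μ]
    (α L : ℝ) (hα : 0 < α) (hL : 0 < L) (X : Ω → ℝ) (hX : Measurable X) :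
    gboNorm μ α L X ≤
        orliczNorm μ (fun x => Real.exp (min (x ^ 2) ((x / L) ^ α)) - 1) X ∧
      orliczNorm μ (fun x => Real.exp (min (x ^ 2) ((x / L) ^ α)) - 1) X ≤
        2 * gboNorm μ α L X :=
  gbo_equiv_phi_general μ α L hα hL X
end

section
/- Fix α > 0 and L ≥ 0. For any finite sequence of (possibly dependent) real-valued random variables X_1, …, X_k, ‖X_1 + ⋯ + X_k‖_{Ψ_{α,L}} ≤ Q_α · (‖X_1‖_{Ψ_{α,L}} + ⋯ + ‖X_k‖_{Ψ_{α,L}}), where Q_α := 2e·(4/α)^{1/α} if α < 1 and Q_α := 1 if α ≥ 1. -/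
open MeasureTheory ProbabilityTheory ENNReal

/-!
`Ψ = Ψ_{α,L}` is the generalized inverse of `Ψ⁻¹`, and the generalized inverse of a continuous,
unbounded, concave function is convex. If `Φ` is convex with `Ψ(x/Q) ≤ Φ(x)`, Jensen's inequality
with weights `η_i / Σ η_j` gives `Ψ(|Σ X_i| / (Q Σ η_j)) ≤ Σ_i (η_i / Σ η_j) Φ(|X_i| / η_i)`;
hence `Q Σ η_i` is admissible for `Σ X_i` in the Orlicz norm as soon as `E Φ(|X_i| / η_i) ≤ 1` for
all `i`.

For `α ≥ 1`, `Ψ⁻¹` is concave because `(log u)^p` is concave for `u ≥ exp (max (p - 1) 0)`; take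
`Φ = Ψ` and `Q = 1`. For `α < 1` the term `(log (1 + t))^{1/α}` is not concave near `0`, but
`(log (t + e^{1/α - 1}))^{1/α}` is. Raising `Ψ⁻¹` this way gives a convex generalized inverse
`Φ̃ ≤ Ψ`, and `Φ = (Φ̃ + 1)/2` satisfies `Ψ(x/Q_α) ≤ Φ(x) ≤ (Ψ(x) + 1)/2`, so that
`E Φ(|X_i|/η_i) ≤ 1` whenever `E Ψ(|X_i|/η_i) ≤ 1`. The first inequality only needs
`Q_α ≥ max 2 ((4/α)^{1/α})`.
-/

open Real Set

theorem concaveOn_log_rpow {p : ℝ} (hp : 0 < p) :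
    ConcaveOn ℝ (Ici (Real.exp (max (p - 1) 0))) (fun u => Real.log u ^ p) := by
  have hlog : ∀ u ∈ Ioi (Real.exp (max (p - 1) 0)), max (p - 1) 0 < Real.log u := fun u hu =>
    (lt_log_iff_exp_lt (Real.exp_pos _ |>.trans hu)).2 hu
  have hpos : ∀ u ∈ Ioi (Real.exp (max (p - 1) 0)), 0 < u := fun u hu => (Real.exp_pos _).trans hu
  have hderiv : ∀ q, ∀ u ∈ Ioi (Real.exp (max (p - 1) 0)),
      HasDerivAt (fun u => Real.log u ^ q) (u⁻¹ * q * Real.log u ^ (q - 1)) u := fun q u hu =>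
    (hasDerivAt_log (hpos u hu).ne').rpow_const
      (Or.inl ((le_max_right _ _).trans_lt (hlog u hu)).ne')
  refine concaveOn_of_hasDerivWithinAt2_nonpos (convex_Ici _)
    (f' := fun u => u⁻¹ * p * Real.log u ^ (p - 1))
    (f'' := fun u => -(u ^ 2)⁻¹ * p * Real.log u ^ (p - 1) +
      u⁻¹ * p * (u⁻¹ * (p - 1) * Real.log u ^ (p - 1 - 1)))
    ((continuousOn_log.mono fun u hu => ((Real.exp_pos _).trans_le hu).ne').rpow_const
      fun _ _ => Or.inr hp.le)
    (fun u hu => ?_) (fun u hu => ?_) fun u hu => ?_ <;> simp only [interior_Ici] at hu ⊢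
  · exact (hderiv p u hu).hasDerivWithinAt
  · exact (((hasDerivAt_inv (hpos u hu).ne').mul_const p).mul
      (hderiv (p - 1) u hu)).hasDerivWithinAt
  have hℓ : 0 < Real.log u := (le_max_right _ _).trans_lt (hlog u hu)
  have hr : Real.log u ^ (p - 1) = Real.log u ^ (p - 1 - 1) * Real.log u := by
    rw [← rpow_add_one hℓ.ne']; ring_nf
  rw [hr]
  calc _ = p * Real.log u ^ (p - 1 - 1) * (u ^ 2)⁻¹ * ((p - 1) - Real.log u) := by ring
    _ ≤ 0 := mul_nonpos_of_nonneg_of_nonpos (by positivity)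
        (by linarith [le_max_left (p - 1) 0, hlog u hu])

theorem concaveOn_log_add_rpow {p b : ℝ} (hp : 0 < p) (hb : Real.exp (max (p - 1) 0) ≤ b) :
    ConcaveOn ℝ (Ici 0) (fun t => Real.log (t + b) ^ p) :=
  ((concaveOn_log_rpow hp).translate_left b).subset
    (fun t (ht : 0 ≤ t) => show Real.exp (max (p - 1) 0) ≤ b + t by linarith) (convex_Ici 0)

noncomputable def lowerInv (c : ℝ) (F : ℝ → ℝ) (x : ℝ) : ℝ := sInf {t | c ≤ t ∧ x ≤ F t}

section lowerInv

variable {c x : ℝ} {F G : ℝ → ℝ}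

theorem lowerInv_le {t : ℝ} (hct : c ≤ t) (hxt : x ≤ F t) : lowerInv c F x ≤ t :=
  csInf_le ⟨c, fun _ hs => hs.1⟩ ⟨hct, hxt⟩

theorem lowerInv_mem (hF : ContinuousOn F (Ici c)) (hx : ∃ t, c ≤ t ∧ x ≤ F t) :
    c ≤ lowerInv c F x ∧ x ≤ F (lowerInv c F x) :=
  (hF.preimage_isClosed_of_isClosed isClosed_Ici isClosed_Ici).csInf_mem hx ⟨c, fun _ hs => hs.1⟩

theorem monotone_lowerInv (hF : ∀ x, ∃ t, c ≤ t ∧ x ≤ F t) : Monotone (lowerInv c F) :=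
  fun _ y hxy => le_csInf (hF y) fun _ ht => lowerInv_le ht.1 (hxy.trans ht.2)

theorem lowerInv_le_lowerInv (hFG : ∀ t, c ≤ t → F t ≤ G t) (hx : ∃ t, c ≤ t ∧ x ≤ F t) :
    lowerInv c G x ≤ lowerInv c F x :=
  le_csInf hx fun t ht => lowerInv_le ht.1 (ht.2.trans (hFG t ht.1))

theorem convexOn_lowerInv (hFc : ContinuousOn F (Ici c)) (hF : ∀ x, ∃ t, c ≤ t ∧ x ≤ F t)
    (hconc : ConcaveOn ℝ (Ici c) F) : ConvexOn ℝ univ (lowerInv c F) := by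
  refine ⟨convex_univ, fun x _ y _ a b ha hb hab => ?_⟩
  obtain ⟨hcx, hx⟩ := lowerInv_mem hFc (hF x)
  obtain ⟨hcy, hy⟩ := lowerInv_mem hFc (hF y)
  refine lowerInv_le (convex_Ici c hcx hcy ha hb hab) ?_
  calc a • x + b • y ≤ a • F (lowerInv c F x) + b • F (lowerInv c F y) := by gcongr
    _ ≤ F (a • lowerInv c F x + b • lowerInv c F y) := hconc.2 hcx hcy ha hb hab

end lowerInv

noncomputable def psiInvShift (L p b t : ℝ) : ℝ := √(Real.log (1 + t)) + L * Real.log (t + b) ^ p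

section psiInvShift

variable {L p b : ℝ}

theorem continuousOn_psiInvShift (hp : 0 ≤ p) (hb : 0 < b) :
    ContinuousOn (psiInvShift L p b) (Ici 0) := by
  have hlog : ∀ c > 0, ContinuousOn (fun t => Real.log (t + c)) (Ici 0) := fun c hc =>
    ContinuousOn.log (by fun_prop) fun t (ht : 0 ≤ t) => by positivity
  have h1 := hlog 1 one_pos
  simp only [add_comm _ (1 : ℝ)] at h1
  exact h1.sqrt.add (continuousOn_const.mul ((hlog b hb).rpow_const fun _ _ => Or.inr hp))

theorem exists_le_psiInvShift (hL : 0 ≤ L) (hb : 1 ≤ b) (x : ℝ) :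
    ∃ t, 0 ≤ t ∧ x ≤ psiInvShift L p b t := by
  have hx := one_le_exp (sq_nonneg x)
  refine ⟨Real.exp (x ^ 2) - 1, by linarith, ?_⟩
  have hlog : 0 ≤ Real.log (Real.exp (x ^ 2) - 1 + b) := Real.log_nonneg (by linarith)
  rw [psiInvShift, add_sub_cancel, Real.log_exp, sqrt_sq_eq_abs]
  exact le_add_of_le_of_nonneg (le_abs_self x) (by positivity)

theorem concaveOn_psiInvShift (hL : 0 ≤ L) (hp : 0 < p) (hb : Real.exp (max (p - 1) 0) ≤ b) :
    ConcaveOn ℝ (Ici 0) (psiInvShift L p b) := by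
  have hsqrt : ConcaveOn ℝ (Ici 0) (fun t => √(Real.log (1 + t))) :=
    (concaveOn_log_add_rpow (p := 1 / 2) (b := 1) one_half_pos (by norm_num)).congr fun t _ => by
      rw [sqrt_eq_rpow, add_comm]
  exact hsqrt.add ((concaveOn_log_add_rpow hp hb).smul hL)

theorem psiInvShift_le_psiInvShift {b' t : ℝ} (hL : 0 ≤ L) (hp : 0 ≤ p) (hb : 1 ≤ b)
    (hbb' : b ≤ b') (ht : 0 ≤ t) : psiInvShift L p b t ≤ psiInvShift L p b' t := by
  unfold psiInvShift
  gcongr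
  exact Real.log_nonneg (by linarith)

end psiInvShift

section Psi

variable {α L : ℝ}

theorem psiInv_eq_psiInvShift : PsiInv α L = psiInvShift L (1 / α) 1 := by
  funext t
  rw [PsiInv, psiInvShift, add_comm t]

theorem psi_eq_lowerInv : Psi α L = lowerInv 0 (psiInvShift L (1 / α) 1) := by
  rw [← psiInv_eq_psiInvShift]
  rfl

theorem monotone_psi (hL : 0 ≤ L) : Monotone (Psi α L) := by
  rw [psi_eq_lowerInv]
  exact monotone_lowerInv (exists_le_psiInvShift hL le_rfl)

theorem psi_zero_nonpos (hL : 0 ≤ L) : Psi α L 0 ≤ 0 :=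
  lowerInv_le le_rfl <| by
    simp only [PsiInv, add_zero, Real.log_one, Real.sqrt_zero, one_div, zero_add]
    positivity

theorem convexOn_psi (hα : 1 ≤ α) (hL : 0 ≤ L) : ConvexOn ℝ univ (Psi α L) := by
  have hp : 1 / α ≤ 1 := div_le_one_of_le₀ hα (by linarith)
  have hb : Real.exp (max (1 / α - 1) 0) ≤ 1 := by
    rw [max_eq_right (by linarith), Real.exp_zero]
  rw [psi_eq_lowerInv]
  exact convexOn_lowerInv (continuousOn_psiInvShift (by positivity) one_pos)
    (exists_le_psiInvShift hL le_rfl) (concaveOn_psiInvShift hL (by positivity) hb)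

end Psi

theorem log_le_two_mul_log {x y : ℝ} (hx : 0 < x) (h : x ≤ y ^ 2) :
    Real.log x ≤ 2 * Real.log y :=
  (Real.log_le_log hx h).trans_eq (by rw [Real.log_pow]; norm_num)

theorem one_le_exp_one_div_sub_one {α : ℝ} (hα : 0 < α) (hα1 : α ≤ 1) :
    1 ≤ Real.exp (1 / α - 1) :=
  one_le_exp (by rw [sub_nonneg, le_div_iff₀ hα]; linarith)

theorem log_add_exp_le {α t : ℝ} (hα : 0 < α) (hα1 : α ≤ 1) (ht : 0 ≤ t) :
    Real.log (t + Real.exp (1 / α - 1)) ≤ 4 / α * Real.log (1 + (t + 1) / 2) := by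
  have hβ : 1 ≤ 1 / α := by rw [le_div_iff₀ hα]; linarith
  have hE := one_le_exp_one_div_sub_one hα hα1
  have hℓ : 1 / 3 ≤ Real.log (1 + (t + 1) / 2) := by
    have hinv : (1 + (t + 1) / 2)⁻¹ ≤ 2 / 3 := by
      rw [inv_le_comm₀ (by linarith) (by norm_num)]; linarith
    linarith [one_sub_inv_le_log_of_pos (by linarith : (0 : ℝ) < 1 + (t + 1) / 2)]
  have hsplit : Real.log (t + Real.exp (1 / α - 1)) ≤ (1 / α - 1) + Real.log (t + 2) :=
    calc Real.log (t + Real.exp (1 / α - 1)) ≤ Real.log (Real.exp (1 / α - 1) * (t + 2)) :=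
          Real.log_le_log (by positivity) (by nlinarith)
      _ = (1 / α - 1) + Real.log (t + 2) := by
          rw [Real.log_mul (exp_pos _).ne' (by positivity), Real.log_exp]
  have htwo : Real.log (t + 2) ≤ 2 * Real.log (1 + (t + 1) / 2) :=
    log_le_two_mul_log (by positivity) (by nlinarith)
  rw [show 4 / α = 4 * (1 / α) by ring]
  nlinarith

theorem psiInvShift_le_mul_psiInv {α L t : ℝ} (hα : 0 < α) (hα1 : α ≤ 1) (hL : 0 ≤ L)
    (ht : 0 ≤ t) :
    psiInvShift L (1 / α) (Real.exp (1 / α - 1)) t ≤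
      2 * Real.exp 1 * (4 / α) ^ (1 / α) * PsiInv α L ((t + 1) / 2) := by
  rw [psiInvShift, PsiInv]
  set Q := 2 * Real.exp 1 * (4 / α) ^ (1 / α)
  set ℓ := Real.log (1 + (t + 1) / 2)
  have hℓ : 0 ≤ ℓ := Real.log_nonneg (by linarith)
  have hC : 1 ≤ (4 / α) ^ (1 / α) :=
    one_le_rpow (by rw [le_div_iff₀ hα]; linarith) (one_div_pos.2 hα).le
  have he : 2 ≤ Real.exp 1 := by linarith [add_one_le_exp (1 : ℝ)]
  have hQ : 4 ≤ Q := by nlinarith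
  have hsqrt : √(Real.log (1 + t)) ≤ Q * √ℓ :=
    calc √(Real.log (1 + t)) ≤ √(Q ^ 2 * ℓ) := by
          refine sqrt_le_sqrt ?_
          have : Real.log (1 + t) ≤ 2 * ℓ := log_le_two_mul_log (by positivity) (by nlinarith)
          nlinarith [mul_nonneg (by nlinarith : 0 ≤ Q ^ 2 - 2) hℓ]
      _ = Q * √ℓ := by rw [sqrt_mul (sq_nonneg Q), sqrt_sq (by linarith)]
  have hrpow : Real.log (t + Real.exp (1 / α - 1)) ^ (1 / α) ≤ Q * ℓ ^ (1 / α) :=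
    calc Real.log (t + Real.exp (1 / α - 1)) ^ (1 / α) ≤ (4 / α * ℓ) ^ (1 / α) :=
          rpow_le_rpow (Real.log_nonneg (by linarith [one_le_exp_one_div_sub_one hα hα1]))
            (log_add_exp_le hα hα1 ht) (one_div_pos.2 hα).le
      _ = (4 / α) ^ (1 / α) * ℓ ^ (1 / α) := mul_rpow (div_pos four_pos hα).le hℓ
      _ ≤ Q * ℓ ^ (1 / α) := by gcongr; nlinarith
  nlinarith [mul_le_mul_of_nonneg_left hrpow hL]

noncomputable def convexPsi (α L x : ℝ) : ℝ :=
  (lowerInv 0 (psiInvShift L (1 / α) (Real.exp (1 / α - 1))) x + 1) / 2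

section convexPsi

variable {α L : ℝ}

theorem convexOn_convexPsi (hα : 0 < α) (hα1 : α ≤ 1) (hL : 0 ≤ L) :
    ConvexOn ℝ univ (convexPsi α L) := by
  have hb : Real.exp (max (1 / α - 1) 0) ≤ Real.exp (1 / α - 1) := by
    rw [max_eq_left (by rw [sub_nonneg, le_div_iff₀ hα]; linarith)]
  have h := convexOn_lowerInv
    (continuousOn_psiInvShift (L := L) (one_div_pos.2 hα).le (exp_pos _))
    (exists_le_psiInvShift hL (one_le_exp_one_div_sub_one hα hα1))
    (concaveOn_psiInvShift hL (one_div_pos.2 hα) hb)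
  exact ((h.add_const 1).smul (by norm_num : (0 : ℝ) ≤ 1 / 2)).congr fun x _ => by
    simp only [convexPsi, Pi.add_apply, smul_eq_mul]
    ring

theorem convexPsi_le (hα : 0 < α) (hα1 : α ≤ 1) (hL : 0 ≤ L) (x : ℝ) :
    convexPsi α L x ≤ (Psi α L x + 1) / 2 := by
  rw [convexPsi, psi_eq_lowerInv]
  gcongr
  exact lowerInv_le_lowerInv (fun t ht => psiInvShift_le_psiInvShift hL (one_div_pos.2 hα).le
    le_rfl (one_le_exp_one_div_sub_one hα hα1) ht) (exists_le_psiInvShift hL le_rfl x)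

theorem psi_div_le_convexPsi (hα : 0 < α) (hα1 : α ≤ 1) (hL : 0 ≤ L) (x : ℝ) :
    Psi α L (x / (2 * Real.exp 1 * (4 / α) ^ (1 / α))) ≤ convexPsi α L x := by
  obtain ⟨hs, hxs⟩ := lowerInv_mem
    (continuousOn_psiInvShift (L := L) (one_div_pos.2 hα).le (exp_pos _))
    (exists_le_psiInvShift hL (one_le_exp_one_div_sub_one hα hα1) x)
  have hQ : 0 < 2 * Real.exp 1 * (4 / α) ^ (1 / α) := by
    have := rpow_pos_of_pos (div_pos four_pos hα) (1 / α)
    positivity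
  rw [convexPsi]
  refine lowerInv_le (by linarith) ?_
  rw [div_le_iff₀' hQ]
  exact hxs.trans (psiInvShift_le_mul_psiInv hα hα1 hL hs)

end convexPsi

theorem ENNReal.le_sum_of_forall_lt {ι : Type*} {s : Finset ι} {a : ι → ℝ≥0∞} {c : ℝ≥0∞}
    (h : ∀ r : ι → ℝ≥0∞, (∀ i ∈ s, a i < r i) → c ≤ ∑ i ∈ s, r i) : c ≤ ∑ i ∈ s, a i := by
  classical
  induction s using Finset.induction_on generalizing c with
  | empty => simpa using h a (by simp)
  | insert j s hj ih =>
    rw [Finset.sum_insert hj]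
    refine ENNReal.le_of_forall_pos_le_add fun ε hε hlt => ?_
    have hj_lt : a j < a j + ε :=
      ENNReal.lt_add_right (ENNReal.add_lt_top.1 hlt).1.ne (by simpa using hε.ne')
    rw [add_right_comm, ← tsub_le_iff_left]
    refine ih fun r hr => tsub_le_iff_left.2 ?_
    have := h (Function.update r j (a j + ε)) fun i hi => by
      rcases Finset.mem_insert.1 hi with rfl | hi
      · simpa using hj_lt
      · simpa [Function.update_of_ne (ne_of_mem_of_not_mem hi hj)] using hr i hi
    rwa [Finset.sum_insert hj, Function.update_self,
      Finset.sum_update_of_notMem hj] at this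

section orliczNorm

variable {Ω : Type*} [MeasurableSpace Ω] {μ : Measure Ω} {g : ℝ → ℝ}

theorem orliczNorm_le_ofReal {X : Ω → ℝ} {η : ℝ} (hη : 0 < η)
    (h : ∫⁻ ω, ENNReal.ofReal (g (|X ω| / η)) ∂μ ≤ 1) : orliczNorm μ g X ≤ ENNReal.ofReal η :=
  sInf_le ⟨η, ⟨hη, h⟩, rfl⟩

theorem exists_lt_of_orliczNorm_lt {X : Ω → ℝ} {r : ℝ≥0∞} (h : orliczNorm μ g X < r) :
    ∃ η, (0 < η ∧ ∫⁻ ω, ENNReal.ofReal (g (|X ω| / η)) ∂μ ≤ 1) ∧ ENNReal.ofReal η < r := by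
  obtain ⟨_, ⟨η, hη, rfl⟩, hr⟩ := sInf_lt_iff.1 h
  exact ⟨η, hη, hr⟩

theorem orliczNorm_zero [IsProbabilityMeasure μ] (hg : g 0 ≤ 1) :
    orliczNorm μ g (fun _ => 0) = 0 := by
  refine le_antisymm (ENNReal.le_of_forall_pos_le_add fun ε hε _ => ?_) zero_le
  simpa using orliczNorm_le_ofReal (μ := μ) (g := g) (X := fun _ => 0) (η := ε) hε
    (by simpa using hg)

theorem lintegral_ofReal_le_one_of_le [IsProbabilityMeasure μ] {f h : Ω → ℝ} {θ : ℝ}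
    (hθ0 : 0 ≤ θ) (hθ1 : θ ≤ 1) (hfh : ∀ ω, f ω ≤ (1 - θ) * h ω + θ)
    (hh : ∫⁻ ω, ENNReal.ofReal (h ω) ∂μ ≤ 1) : ∫⁻ ω, ENNReal.ofReal (f ω) ∂μ ≤ 1 :=
  calc ∫⁻ ω, ENNReal.ofReal (f ω) ∂μ
      ≤ ∫⁻ ω, ENNReal.ofReal (1 - θ) * ENNReal.ofReal (h ω) + ENNReal.ofReal θ ∂μ :=
        lintegral_mono fun ω => (ENNReal.ofReal_le_ofReal (hfh ω)).trans <|
          (ENNReal.ofReal_add_le).trans_eq (by rw [ENNReal.ofReal_mul (by linarith)])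
    _ = ENNReal.ofReal (1 - θ) * ∫⁻ ω, ENNReal.ofReal (h ω) ∂μ + ENNReal.ofReal θ := by
        rw [lintegral_add_right _ measurable_const, lintegral_const_mul' _ _ ENNReal.ofReal_ne_top,
          lintegral_const, measure_univ, mul_one]
    _ ≤ ENNReal.ofReal (1 - θ) * 1 + ENNReal.ofReal θ := by gcongr
    _ = 1 := by
        rw [mul_one, ← ENNReal.ofReal_add (by linarith) hθ0, sub_add_cancel, ENNReal.ofReal_one]

variable {ι : Type*} [Fintype ι] [Nonempty ι] {Φ : ℝ → ℝ} {Q : ℝ}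

theorem apply_abs_sum_div_le_sum_mul (hg : Monotone g) (hΦ : ConvexOn ℝ univ Φ)
    (hgΦ : ∀ x, g (x / Q) ≤ Φ x) (hQ : 0 < Q) (x η : ι → ℝ) (hη : ∀ i, 0 < η i) :
    g (|∑ i, x i| / (Q * ∑ i, η i)) ≤ ∑ i, (η i / ∑ j, η j) * Φ (|x i| / η i) := by
  have hT : 0 < ∑ i, η i := Finset.sum_pos (fun i _ => hη i) Finset.univ_nonempty
  calc g (|∑ i, x i| / (Q * ∑ i, η i)) ≤ g ((∑ i, |x i|) / (∑ i, η i) / Q) := hg <| by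
        rw [div_div, mul_comm Q]
        gcongr
        exact Finset.abs_sum_le_sum_abs _ _
    _ ≤ Φ ((∑ i, |x i|) / ∑ i, η i) := hgΦ _
    _ = Φ (∑ i, (η i / ∑ j, η j) • (|x i| / η i)) := by
        rw [Finset.sum_div]
        congr 1
        refine Finset.sum_congr rfl fun i _ => ?_
        rw [smul_eq_mul]
        field_simp [(hη i).ne']
    _ ≤ ∑ i, (η i / ∑ j, η j) * Φ (|x i| / η i) :=
        hΦ.map_sum_le (fun i _ => (div_pos (hη i) hT).le)
          (by rw [← Finset.sum_div, div_self hT.ne']) fun i _ => mem_univ _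

theorem lintegral_sum_le_one [IsProbabilityMeasure μ] (hg : Monotone g)
    (hΦ : ConvexOn ℝ univ Φ) (hgΦ : ∀ x, g (x / Q) ≤ Φ x) (hQ : 0 < Q) {X : ι → Ω → ℝ}
    (hX : ∀ i, Measurable (X i)) {η : ι → ℝ} (hη : ∀ i, 0 < η i)
    (h : ∀ i, ∫⁻ ω, ENNReal.ofReal (Φ (|X i ω| / η i)) ∂μ ≤ 1) :
    ∫⁻ ω, ENNReal.ofReal (g (|∑ i, X i ω| / (Q * ∑ i, η i))) ∂μ ≤ 1 := by
  have hT : 0 < ∑ i, η i := Finset.sum_pos (fun i _ => hη i) Finset.univ_nonempty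
  set w : ι → ℝ := fun i => η i / ∑ j, η j
  have hΦm : Measurable Φ := (continuousOn_univ.1 (hΦ.continuousOn isOpen_univ)).measurable
  have hm : ∀ i, Measurable fun ω => ENNReal.ofReal (Φ (|X i ω| / η i)) := fun i =>
    (hΦm.comp ((hX i).abs.div_const _)).ennreal_ofReal
  calc ∫⁻ ω, ENNReal.ofReal (g (|∑ i, X i ω| / (Q * ∑ i, η i))) ∂μ
      ≤ ∫⁻ ω, ∑ i, ENNReal.ofReal (w i) * ENNReal.ofReal (Φ (|X i ω| / η i)) ∂μ :=
        lintegral_mono fun ω => (ENNReal.ofReal_le_ofReal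
          (apply_abs_sum_div_le_sum_mul hg hΦ hgΦ hQ (X · ω) η hη)).trans <|
            (Finset.le_sum_of_subadditive _ ENNReal.ofReal_zero.le
              (fun _ _ => ENNReal.ofReal_add_le) _ _).trans_eq <|
            Finset.sum_congr rfl fun i _ => ENNReal.ofReal_mul (div_pos (hη i) hT).le
    _ = ∑ i, ENNReal.ofReal (w i) * ∫⁻ ω, ENNReal.ofReal (Φ (|X i ω| / η i)) ∂μ := by
        rw [lintegral_finsetSum _ fun i _ => (hm i).const_mul _]
        simp_rw [lintegral_const_mul' _ _ ENNReal.ofReal_ne_top]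
    _ ≤ ∑ i, ENNReal.ofReal (w i) * 1 := by gcongr with i; exact h i
    _ = ENNReal.ofReal (∑ i, w i) := by
        simp only [mul_one]
        exact (ENNReal.ofReal_sum_of_nonneg fun i _ => (div_pos (hη i) hT).le).symm
    _ = 1 := by simp only [w, ← Finset.sum_div, div_self hT.ne', ENNReal.ofReal_one]

theorem orliczNorm_sum_le [IsProbabilityMeasure μ] {θ : ℝ} (hg : Monotone g)
    (hΦ : ConvexOn ℝ univ Φ) (hgΦ : ∀ x, g (x / Q) ≤ Φ x)
    (hΦg : ∀ x, Φ x ≤ (1 - θ) * g x + θ) (hθ0 : 0 ≤ θ) (hθ1 : θ ≤ 1) (hQ : 0 < Q)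
    {X : ι → Ω → ℝ} (hX : ∀ i, Measurable (X i)) :
    orliczNorm μ g (fun ω => ∑ i, X i ω) ≤ ENNReal.ofReal Q * ∑ i, orliczNorm μ g (X i) := by
  have hQ0 : ENNReal.ofReal Q ≠ 0 := ENNReal.ofReal_pos.2 hQ |>.ne'
  rw [mul_comm, ← ENNReal.div_le_iff hQ0 ENNReal.ofReal_ne_top]
  refine ENNReal.le_sum_of_forall_lt fun r hr => ?_
  choose η hη hηr using fun i => exists_lt_of_orliczNorm_lt (hr i (Finset.mem_univ i))
  rw [ENNReal.div_le_iff hQ0 ENNReal.ofReal_ne_top]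
  calc orliczNorm μ g (fun ω => ∑ i, X i ω) ≤ ENNReal.ofReal (Q * ∑ i, η i) :=
        orliczNorm_le_ofReal (mul_pos hQ (Finset.sum_pos (fun i _ => (hη i).1)
          Finset.univ_nonempty)) (lintegral_sum_le_one hg hΦ hgΦ hQ hX (fun i => (hη i).1)
            fun i => lintegral_ofReal_le_one_of_le hθ0 hθ1 (fun ω => hΦg _) (hη i).2)
    _ = (∑ i, ENNReal.ofReal (η i)) * ENNReal.ofReal Q := by
        rw [mul_comm, ENNReal.ofReal_mul (Finset.sum_nonneg fun i _ => (hη i).1.le),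
          ENNReal.ofReal_sum_of_nonneg fun i _ => (hη i).1.le]
    _ ≤ (∑ i, r i) * ENNReal.ofReal Q := by gcongr with i; exact (hηr i).le

end orliczNorm

/-- Quasi-norm property of the GBO norm:
`‖Σᵢ Xᵢ‖_{Ψ_{α,L}} ≤ Q_α Σᵢ ‖Xᵢ‖_{Ψ_{α,L}}`, where `Q_α = 2e(4/α)^{1/α}` if `α < 1`
and `Q_α = 1` if `α ≥ 1`. -/
theorem gbo_quasi_norm {Ω : Type*} [MeasurableSpace Ω] (μ : Measure Ω) [IsProbabilityMeasure μ]
    (α L : ℝ) (hα : 0 < α) (hL : 0 ≤ L) (k : ℕ) (X : Fin k → Ω → ℝ)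
    (hX : ∀ i, Measurable (X i)) :
    gboNorm μ α L (fun ω => ∑ i, X i ω) ≤
      ENNReal.ofReal (if α < 1 then 2 * Real.exp 1 * (4 / α) ^ (1 / α) else 1) *
        ∑ i, gboNorm μ α L (X i) := by
  rcases k.eq_zero_or_pos with rfl | hk
  · simpa [gboNorm] using (orliczNorm_zero ((psi_zero_nonpos hL).trans zero_le_one)).le
  have : Nonempty (Fin k) := Fin.pos_iff_nonempty.1 hk
  split_ifs with hα1
  · have hQ : 0 < 2 * Real.exp 1 * (4 / α) ^ (1 / α) := by
      have := rpow_pos_of_pos (div_pos four_pos hα) (1 / α)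
      positivity
    exact orliczNorm_sum_le (θ := 1 / 2) (monotone_psi hL) (convexOn_convexPsi hα hα1.le hL)
      (psi_div_le_convexPsi hα hα1.le hL)
      (fun x => (convexPsi_le hα hα1.le hL x).trans_eq (by ring)) (by norm_num) (by norm_num) hQ hX
  · exact orliczNorm_sum_le (θ := 0) (monotone_psi hL) (convexOn_psi (not_lt.1 hα1) hL)
      (by simp) (by simp) le_rfl zero_le_one one_pos hX
end

section
/- Let W_1, …, W_k be (possibly dependent) real-valued random variables satisfying ‖W_i‖_{ψ_{α_i}} < ∞ for some α_i > 0, 1 ≤ i ≤ k. Then ‖ ∏_{i=1}^k W_i ‖_{ψ_β} ≤ ∏_{i=1}^k ‖W_i‖_{ψ_{α_i}}, where 1/β := Σ_{i=1}^k 1/α_i. -/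
open MeasureTheory ProbabilityTheory ENNReal

/-!
Put `β := (∑ 1/αᵢ)⁻¹`, so that the weights `β/αᵢ` sum to one. For `xᵢ ≥ 0`, weighted AM-GM
gives `(∏ xᵢ)^β = ∏ (xᵢ^αᵢ)^(β/αᵢ) ≤ ∑ (β/αᵢ) xᵢ^αᵢ`, and convexity of `exp` then gives
`exp((∏ xᵢ)^β) ≤ ∑ (β/αᵢ) exp(xᵢ^αᵢ)`. Applied to `xᵢ = |Wᵢ|/ηᵢ` and integrated, this shows that
`∏ ηᵢ` is an admissible scale for `∏ Wᵢ` whenever each `ηᵢ` is one for `Wᵢ`; letting `ηᵢ`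
decrease to `‖Wᵢ‖_{ψ_αᵢ}` gives the inequality. No independence is needed.
-/

open Finset NNReal Filter Topology

theorem sum_inv_sum_inv_div {ι : Type*} [Fintype ι] {α : ι → ℝ} (h : ∑ j, (α j)⁻¹ ≠ 0) :
    ∑ i, (∑ j, (α j)⁻¹)⁻¹ / α i = 1 := by
  simp only [div_eq_mul_inv, ← mul_sum]
  exact inv_mul_cancel₀ h

section Pointwise

variable {ι : Type*} [Fintype ι] {α x : ι → ℝ} {β : ℝ}

theorem rpow_prod_le_sum_div_mul_rpow (hα : ∀ i, 0 < α i) (hβ : 0 ≤ β)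
    (hw : ∑ i, β / α i = 1) (hx : ∀ i, 0 ≤ x i) :
    (∏ i, x i) ^ β ≤ ∑ i, β / α i * x i ^ α i := by
  have hpow : ∀ i, x i ^ β = (x i ^ α i) ^ (β / α i) := fun i => by
    rw [← Real.rpow_mul (hx i), mul_div_cancel₀ _ (hα i).ne']
  calc (∏ i, x i) ^ β = ∏ i, (x i ^ α i) ^ (β / α i) := by
        rw [← Real.finsetProd_rpow _ _ fun i _ => hx i]
        exact prod_congr rfl fun i _ => hpow i
    _ ≤ ∑ i, β / α i * x i ^ α i :=
        Real.geom_mean_le_arith_mean_weighted _ _ _ (fun i _ => div_nonneg hβ (hα i).le) hw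
          fun i _ => Real.rpow_nonneg (hx i) _

theorem exp_rpow_prod_le_sum_div_mul_exp (hα : ∀ i, 0 < α i) (hβ : 0 ≤ β)
    (hw : ∑ i, β / α i = 1) (hx : ∀ i, 0 ≤ x i) :
    Real.exp ((∏ i, x i) ^ β) ≤ ∑ i, β / α i * Real.exp (x i ^ α i) :=
  calc Real.exp ((∏ i, x i) ^ β) ≤ Real.exp (∑ i, β / α i * x i ^ α i) :=
        Real.exp_le_exp.2 (rpow_prod_le_sum_div_mul_rpow hα hβ hw hx)
    _ ≤ ∑ i, β / α i * Real.exp (x i ^ α i) :=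
        convexOn_exp.map_sum_le (fun i _ => div_nonneg hβ (hα i).le) hw fun _ _ => Set.mem_univ _

end Pointwise

section PsiScales

variable {Ω : Type*} [MeasurableSpace Ω] {μ : Measure Ω}

def psiScales (μ : Measure Ω) (α : ℝ) (X : Ω → ℝ) : Set ℝ :=
  {η | 0 < η ∧ ∫⁻ ω, ENNReal.ofReal (Real.exp ((|X ω| / η) ^ α)) ∂μ ≤ 2}

theorem psiNorm_le_ofReal {α η : ℝ} {X : Ω → ℝ} (h : η ∈ psiScales μ α X) :
    psiNorm μ α X ≤ ENNReal.ofReal η :=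
  sInf_le ⟨η, h, rfl⟩

theorem mem_psiScales_of_le {α η η' : ℝ} {X : Ω → ℝ} (hα : 0 ≤ α) (h : η ∈ psiScales μ α X)
    (hη : η ≤ η') : η' ∈ psiScales μ α X := by
  refine ⟨h.1.trans_le hη, le_trans (lintegral_mono fun ω => ?_) h.2⟩
  gcongr
  · exact div_nonneg (abs_nonneg _) (h.1.le.trans hη)
  · exact h.1

theorem mem_psiScales_of_psiNorm_lt {α r : ℝ} {X : Ω → ℝ} (hα : 0 ≤ α)
    (h : psiNorm μ α X < ENNReal.ofReal r) : r ∈ psiScales μ α X := by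
  obtain ⟨_, ⟨η, hη, rfl⟩, hlt⟩ := sInf_lt_iff.1 h
  exact mem_psiScales_of_le hα hη ((ENNReal.ofReal_lt_ofReal_iff'.1 hlt).1.le)

theorem prod_mem_psiScales {ι : Type*} [Fintype ι] {α : ι → ℝ} {β : ℝ}
    (hα : ∀ i, 0 < α i) (hβ : 0 ≤ β) (hw : ∑ i, β / α i = 1) {W : ι → Ω → ℝ}
    (hW : ∀ i, AEMeasurable (W i) μ) {η : ι → ℝ} (hη : ∀ i, η i ∈ psiScales μ (α i) (W i)) :
    ∏ i, η i ∈ psiScales μ β (fun ω => ∏ i, W i ω) := by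
  have hw0 : ∀ i, 0 ≤ β / α i := fun i => div_nonneg hβ (hα i).le
  set F : ι → Ω → ℝ≥0∞ := fun i ω => ENNReal.ofReal (Real.exp ((|W i ω| / η i) ^ α i))
  have hF : ∀ i, AEMeasurable (F i) μ := fun i => by fun_prop
  refine ⟨prod_pos fun i _ => (hη i).1, ?_⟩
  calc ∫⁻ ω, ENNReal.ofReal (Real.exp ((|∏ i, W i ω| / ∏ i, η i) ^ β)) ∂μ
      ≤ ∫⁻ ω, ∑ i, ENNReal.ofReal (β / α i) * F i ω ∂μ := lintegral_mono fun ω => by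
        simp only [F, ← ENNReal.ofReal_mul (hw0 _)]
        rw [← ENNReal.ofReal_sum_of_nonneg fun i _ => mul_nonneg (hw0 i) (Real.exp_nonneg _),
          abs_prod, ← Finset.prod_div_distrib]
        exact ENNReal.ofReal_le_ofReal <| exp_rpow_prod_le_sum_div_mul_exp hα hβ hw
          fun i => div_nonneg (abs_nonneg _) (hη i).1.le
    _ = ∑ i, ENNReal.ofReal (β / α i) * ∫⁻ ω, F i ω ∂μ := by
        rw [lintegral_finsetSum' _ fun i _ => (hF i).const_mul _]
        exact sum_congr rfl fun i _ => lintegral_const_mul'' _ (hF i)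
    _ ≤ ∑ i, ENNReal.ofReal (β / α i) * 2 := by gcongr with i; exact (hη i).2
    _ = 2 := by
        rw [← sum_mul, ← ENNReal.ofReal_sum_of_nonneg fun i _ => hw0 i, hw, ENNReal.ofReal_one,
          one_mul]

end PsiScales

theorem ENNReal.le_prod_of_forall_lt_coe {ι : Type*} [Fintype ι] {a : ι → ℝ≥0∞} {b : ℝ≥0∞}
    (ha : ∀ i, a i ≠ ∞) (h : ∀ r : ι → ℝ≥0, (∀ i, a i < r i) → b ≤ ∏ i, (r i : ℝ≥0∞)) :
    b ≤ ∏ i, a i := by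
  lift a to ι → ℝ≥0 using ha
  have hlim : Tendsto (fun δ : ℝ≥0 => ((∏ i, (a i + δ) : ℝ≥0) : ℝ≥0∞)) (𝓝[>] 0)
      (𝓝 (∏ i, a i : ℝ≥0)) := by
    refine ENNReal.tendsto_coe.2 (tendsto_nhdsWithin_of_tendsto_nhds ?_)
    simpa using ((continuous_finsetProd _ fun i _ => continuous_const.add continuous_id).tendsto
      (0 : ℝ≥0))
  push_cast at hlim ⊢
  refine ge_of_tendsto hlim (eventually_nhdsWithin_of_forall fun δ hδ => ?_)
  push_cast at h
  exact h _ fun i => ENNReal.coe_lt_coe.2 (lt_add_of_pos_right _ hδ)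

theorem psiNorm_prod_le_general {Ω : Type*} [MeasurableSpace Ω] (μ : Measure Ω)
    (k : ℕ) (hk : 0 < k) (α : Fin k → ℝ) (hα : ∀ i, 0 < α i)
    (W : Fin k → Ω → ℝ) (hW : ∀ i, Measurable (W i))
    (hfin : ∀ i, psiNorm μ (α i) (W i) ≠ ⊤) :
    psiNorm μ (∑ i, (α i)⁻¹)⁻¹ (fun ω => ∏ i, W i ω) ≤ ∏ i, psiNorm μ (α i) (W i) := by
  have : Nonempty (Fin k) := Fin.pos_iff_nonempty.1 hk
  have hsum : 0 < ∑ i, (α i)⁻¹ := sum_pos (fun i _ => inv_pos.2 (hα i)) univ_nonempty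
  refine ENNReal.le_prod_of_forall_lt_coe hfin fun r hr => ?_
  have hr : ∀ i, (r i : ℝ) ∈ psiScales μ (α i) (W i) := fun i =>
    mem_psiScales_of_psiNorm_lt (hα i).le (by simpa using hr i)
  have hprod := prod_mem_psiScales hα (inv_nonneg.2 hsum.le) (sum_inv_sum_inv_div hsum.ne')
    (fun i => (hW i).aemeasurable) hr
  simpa [ENNReal.ofReal_prod_of_nonneg] using psiNorm_le_ofReal hprod

/-- Hölder-type inequality for `ψ_α` norms of products:
`‖∏ᵢ Wᵢ‖_{ψ_β} ≤ ∏ᵢ ‖Wᵢ‖_{ψ_{αᵢ}}` where `1/β = Σᵢ 1/αᵢ`. -/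
theorem psiNorm_prod_le {Ω : Type*} [MeasurableSpace Ω] (μ : Measure Ω)
    [IsProbabilityMeasure μ] (k : ℕ) (hk : 0 < k) (α : Fin k → ℝ) (hα : ∀ i, 0 < α i)
    (W : Fin k → Ω → ℝ) (hW : ∀ i, Measurable (W i))
    (hfin : ∀ i, psiNorm μ (α i) (W i) ≠ ⊤) :
    psiNorm μ (∑ i, (α i)⁻¹)⁻¹ (fun ω => ∏ i, W i ω) ≤ ∏ i, psiNorm μ (α i) (W i) :=
  psiNorm_prod_le_general μ k hk α hα W hW hfin
end

section
/- Let Z_1, …, Z_n be independent mean-zero real-valued random variables with |Z_i| ≤ U almost surely for all i. Then for every p ≥ 1, (E[|Σ_{i=1}^n Z_i|^p])^{1/p} ≤ √(6p)·(Σ_{i=1}^n E[Z_i²])^{1/2} + 10·p·U. -/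
open MeasureTheory ProbabilityTheory ENNReal

/-!
For `|t| U ≤ 1` the inequality `exp x ≤ 1 + x + x²` (valid for `x ≤ 1`) gives
`E[exp (t Zᵢ)] ≤ exp (t² E[Zᵢ²])`, so by independence `S = ∑ Zᵢ` satisfies
`E[exp (t S)] ≤ exp (t² V)` with `V = ∑ E[Zᵢ²]`, and `E[exp (l |S|)] ≤ 2 exp (l² V)`.
The pointwise bound `x ^ p ≤ (p / (e l)) ^ p exp (l x)` turns `E[exp (l |S|)] ≤ 2 eᵖ` into
`‖S‖_p ≤ 2 p / l`. Both constraints `l U ≤ 1` and `l² V ≤ p` hold for `1 / l = √(V / p) + U`,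
which yields `‖S‖_p ≤ 2 √(p V) + 2 p U`.
-/
open Real

lemma Real.exp_le_one_add_add_sq {x : ℝ} (hx : x ≤ 1) : exp x ≤ 1 + x + x ^ 2 := by
  rcases le_or_gt x (-1) with hx' | hx'
  · nlinarith [exp_le_one_iff.2 (by linarith : x ≤ 0)]
  · have := abs_le.1 (abs_exp_sub_one_sub_id_le (abs_le.2 ⟨hx'.le, hx⟩))
    linarith [this.2]

-- `(p / (e l)) ^ p` is the maximum of `t ↦ t ^ p * exp (-l * t)`, attained at `t = p / l`.
lemma Real.rpow_le_mul_exp_mul {t p l : ℝ} (ht : 0 ≤ t) (hp : 0 < p) (hl : 0 < l) :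
    t ^ p ≤ (p / (exp 1 * l)) ^ p * exp (l * t) := by
  set y := l * t / p
  have hy : 0 ≤ y := by positivity
  have hty : t = p / l * y := by simp only [y]; field_simp
  have hexp : y ^ p ≤ exp (l * t) / exp 1 ^ p := by
    calc y ^ p ≤ exp (y - 1) ^ p := rpow_le_rpow hy (by linarith [add_one_le_exp (y - 1)]) hp.le
      _ = exp (l * t) / exp 1 ^ p := by
        rw [← exp_mul, exp_one_rpow, ← exp_sub]; congr 1; simp only [y]; field_simp
  calc t ^ p = (p / l) ^ p * y ^ p := by rw [hty, mul_rpow (by positivity) hy]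
    _ ≤ (p / l) ^ p * (exp (l * t) / exp 1 ^ p) := by gcongr
    _ = (p / (exp 1 * l)) ^ p * exp (l * t) := by
      rw [div_mul_eq_div_div_swap, div_rpow (by positivity) (exp_pos 1).le]; ring

namespace ProbabilityTheory

variable {Ω : Type*} [MeasurableSpace Ω] {μ : Measure Ω} {X : Ω → ℝ}

lemma mgf_le_exp_sq_mul_integral_sq_of_abs_le [IsProbabilityMeasure μ] {U t : ℝ}
    (hX : AEMeasurable X μ) (hmean : ∫ ω, X ω ∂μ = 0) (hbdd : ∀ᵐ ω ∂μ, |X ω| ≤ U)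
    (ht : |t| * U ≤ 1) :
    mgf X μ t ≤ exp (t ^ 2 * ∫ ω, X ω ^ 2 ∂μ) := by
  have hX_int : Integrable X μ :=
    .of_bound hX.aestronglyMeasurable U (by simpa only [Real.norm_eq_abs] using hbdd)
  have hX2_int : Integrable (fun ω ↦ X ω ^ 2) μ :=
    .of_bound (hX.pow_const 2).aestronglyMeasurable (U ^ 2) <| by
      filter_upwards [hbdd] with ω hω
      rw [Real.norm_eq_abs, abs_pow]
      exact pow_le_pow_left₀ (abs_nonneg _) hω 2
  have hlin_int : Integrable (fun ω ↦ 1 + t * X ω) μ :=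
    (integrable_const 1).add (hX_int.const_mul t)
  have hquad_int : Integrable (fun ω ↦ t ^ 2 * X ω ^ 2) μ := hX2_int.const_mul _
  calc mgf X μ t = ∫ ω, exp (t * X ω) ∂μ := rfl
    _ ≤ ∫ ω, (1 + t * X ω + t ^ 2 * X ω ^ 2) ∂μ := by
      refine integral_mono_of_nonneg (ae_of_all _ fun ω ↦ (exp_pos _).le)
        (hlin_int.add hquad_int) ?_
      filter_upwards [hbdd] with ω hω
      have htX : t * X ω ≤ 1 := calc
        t * X ω ≤ |t| * |X ω| := by rw [← abs_mul]; exact le_abs_self _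
        _ ≤ |t| * U := by gcongr
        _ ≤ 1 := ht
      simpa only [mul_pow] using exp_le_one_add_add_sq htX
    _ = 1 + t ^ 2 * ∫ ω, X ω ^ 2 ∂μ := by
      rw [integral_add hlin_int hquad_int, integral_add (integrable_const 1) (hX_int.const_mul t),
        integral_const_mul, integral_const_mul, hmean]
      simp
    _ ≤ exp (t ^ 2 * ∫ ω, X ω ^ 2 ∂μ) := by linarith [add_one_le_exp (t ^ 2 * ∫ ω, X ω ^ 2 ∂μ)]

lemma iIndepFun.mgf_sum_le_exp_sq_mul {ι : Type*} {Z : ι → Ω → ℝ} (hindep : iIndepFun Z μ)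
    (hmeas : ∀ i, Measurable (Z i)) (s : Finset ι) {t : ℝ} {v : ι → ℝ}
    (h : ∀ i ∈ s, mgf (Z i) μ t ≤ exp (t ^ 2 * v i)) :
    mgf (∑ i ∈ s, Z i) μ t ≤ exp (t ^ 2 * ∑ i ∈ s, v i) := by
  rw [hindep.mgf_sum hmeas, Finset.mul_sum, exp_sum]
  exact Finset.prod_le_prod (fun i _ ↦ mgf_nonneg) h

lemma integral_exp_mul_abs_le_mgf_add_mgf {l : ℝ}
    (hpos : Integrable (fun ω ↦ exp (l * X ω)) μ) (hneg : Integrable (fun ω ↦ exp (-l * X ω)) μ) :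
    ∫ ω, exp (l * |X ω|) ∂μ ≤ mgf X μ l + mgf X μ (-l) := by
  rw [mgf, mgf, ← integral_add hpos hneg]
  refine integral_mono (integrable_exp_mul_abs hpos hneg) (hpos.add hneg) fun ω ↦ ?_
  rcases abs_cases (X ω) with ⟨h, _⟩ | ⟨h, _⟩
  · rw [h]; exact le_add_of_nonneg_right (exp_pos _).le
  · rw [h, mul_neg, ← neg_mul]; exact le_add_of_nonneg_left (exp_pos _).le

lemma integral_rpow_abs_le_of_integral_exp_mul_abs_le {l p C : ℝ} (hl : 0 < l) (hp : 0 < p)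
    (hint : Integrable (fun ω ↦ exp (l * |X ω|)) μ) (h : ∫ ω, exp (l * |X ω|) ∂μ ≤ C) :
    ∫ ω, |X ω| ^ p ∂μ ≤ (p / (exp 1 * l)) ^ p * C := by
  calc ∫ ω, |X ω| ^ p ∂μ ≤ ∫ ω, (p / (exp 1 * l)) ^ p * exp (l * |X ω|) ∂μ :=
        integral_mono_of_nonneg (ae_of_all _ fun ω ↦ by positivity) (hint.const_mul _)
          (ae_of_all _ fun ω ↦ rpow_le_mul_exp_mul (abs_nonneg _) hp hl)
    _ = (p / (exp 1 * l)) ^ p * ∫ ω, exp (l * |X ω|) ∂μ := integral_const_mul _ _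
    _ ≤ (p / (exp 1 * l)) ^ p * C := by gcongr

lemma moment_le_of_integral_exp_mul_abs_le {l p : ℝ} (hl : 0 < l) (hp : 1 ≤ p)
    (hint : Integrable (fun ω ↦ exp (l * |X ω|)) μ) (h : ∫ ω, exp (l * |X ω|) ∂μ ≤ 2 * exp p) :
    (∫ ω, |X ω| ^ p ∂μ) ^ (1 / p) ≤ 2 * p / l := by
  have hp0 : 0 < p := by linarith
  have hpow_inv {a : ℝ} (ha : 0 ≤ a) : (a ^ p) ^ (1 / p) = a := by
    rw [← rpow_mul ha, mul_one_div_cancel hp0.ne', Real.rpow_one]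
  have htwo : (2 : ℝ) ^ (1 / p) ≤ 2 :=
    (Real.rpow_le_rpow_of_exponent_le one_le_two ((div_le_one hp0).2 hp)).trans_eq
      (Real.rpow_one 2)
  calc (∫ ω, |X ω| ^ p ∂μ) ^ (1 / p)
      ≤ ((p / (exp 1 * l)) ^ p * (2 * exp 1 ^ p)) ^ (1 / p) := by
        rw [exp_one_rpow]
        exact rpow_le_rpow (integral_nonneg fun ω ↦ by positivity)
          (integral_rpow_abs_le_of_integral_exp_mul_abs_le hl hp0 hint h) (by positivity)
    _ = p / (exp 1 * l) * 2 ^ (1 / p) * exp 1 := by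
        rw [mul_rpow (by positivity) (by positivity), mul_rpow (by positivity) (by positivity),
          hpow_inv (by positivity), hpow_inv (exp_pos 1).le, mul_assoc]
    _ ≤ p / (exp 1 * l) * 2 * exp 1 := by gcongr
    _ = 2 * p / l := by field_simp

section BoundedSum

variable [IsProbabilityMeasure μ] {ι : Type*} {Z : ι → Ω → ℝ} {U : ℝ}

lemma iIndepFun.integrable_exp_mul_sum_of_abs_le (hindep : iIndepFun Z μ)
    (hmeas : ∀ i, Measurable (Z i)) (hbdd : ∀ i, ∀ᵐ ω ∂μ, |Z i ω| ≤ U) (s : Finset ι) (t : ℝ) :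
    Integrable (fun ω ↦ exp (t * (∑ i ∈ s, Z i) ω)) μ :=
  hindep.integrable_exp_mul_sum hmeas fun i _ ↦
    integrable_exp_mul_of_mem_Icc (hmeas i).aemeasurable ((hbdd i).mono fun _ ↦ abs_le.1)

lemma iIndepFun.integral_exp_mul_abs_sum_le (hindep : iIndepFun Z μ)
    (hmeas : ∀ i, Measurable (Z i)) (hmean : ∀ i, ∫ ω, Z i ω ∂μ = 0)
    (hbdd : ∀ i, ∀ᵐ ω ∂μ, |Z i ω| ≤ U) (s : Finset ι) {l : ℝ} (hl : |l| * U ≤ 1) :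
    ∫ ω, exp (l * |(∑ i ∈ s, Z i) ω|) ∂μ ≤ 2 * exp (l ^ 2 * ∑ i ∈ s, ∫ ω, Z i ω ^ 2 ∂μ) := by
  have hmgf (t : ℝ) (ht : |t| = |l|) :
      mgf (∑ i ∈ s, Z i) μ t ≤ exp (l ^ 2 * ∑ i ∈ s, ∫ ω, Z i ω ^ 2 ∂μ) := by
    refine (hindep.mgf_sum_le_exp_sq_mul hmeas s fun i _ ↦
      mgf_le_exp_sq_mul_integral_sq_of_abs_le (hmeas i).aemeasurable (hmean i) (hbdd i)
        (ht ▸ hl)).trans_eq ?_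
    rw [← sq_abs, ht, sq_abs]
  have hint := hindep.integrable_exp_mul_sum_of_abs_le hmeas hbdd s
  linarith [integral_exp_mul_abs_le_mgf_add_mgf (hint l) (hint (-l)), hmgf l rfl,
    hmgf (-l) (abs_neg l)]

end BoundedSum

end ProbabilityTheory

lemma two_mul_mul_div_sqrt_add_le {σ p U : ℝ} (hσ : 0 ≤ σ) (hp : 0 < p) (hU : 0 ≤ U) :
    2 * p * (σ / √p + U) ≤ √(6 * p) * σ + 10 * p * U := by
  have hsqrt : √(6 * p) = √6 * √p := Real.sqrt_mul (by norm_num) p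
  have hsix : 2 ≤ √6 := Real.le_sqrt_of_sq_le (by norm_num)
  have hpp : 2 * p * (σ / √p) = 2 * √p * σ := by
    field_simp
    rw [Real.sq_sqrt hp.le, mul_comm]
  rw [mul_add, hpp, hsqrt]
  gcongr ?_ * σ + ?_ * U
  · exact mul_le_mul_of_nonneg_right hsix (Real.sqrt_nonneg p)
  · linarith

/-- Bernstein moment inequality for bounded random variables: if
`Z₁, …, Z_n` are independent, mean zero and `|Zᵢ| ≤ U` a.s., then for `p ≥ 1`,
`‖Σᵢ Zᵢ‖_p ≤ √(6p) (Σᵢ E[Zᵢ²])^{1/2} + 10 p U`. -/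
theorem bernstein_moment_bound {Ω : Type*} [MeasurableSpace Ω] (μ : Measure Ω)
    [IsProbabilityMeasure μ] (n : ℕ) (U : ℝ) (hU : 0 < U) (Z : Fin n → Ω → ℝ)
    (hmeas : ∀ i, Measurable (Z i)) (hindep : iIndepFun Z μ)
    (hmean : ∀ i, ∫ ω, Z i ω ∂μ = 0) (hbdd : ∀ i, ∀ᵐ ω ∂μ, |Z i ω| ≤ U) :
    ∀ p : ℝ, 1 ≤ p →
      (∫ ω, |∑ i, Z i ω| ^ p ∂μ) ^ (1 / p) ≤
        Real.sqrt (6 * p) * Real.sqrt (∑ i, ∫ ω, Z i ω ^ 2 ∂μ) + 10 * p * U := by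
  intro p hp
  have hp0 : 0 < p := by linarith
  set V := ∑ i, ∫ ω, Z i ω ^ 2 ∂μ
  have hV : 0 ≤ V := Finset.sum_nonneg fun i _ ↦ integral_nonneg fun ω ↦ sq_nonneg _
  set D := √V / √p + U
  have hD : 0 < D := by positivity
  have hDU : |D⁻¹| * U ≤ 1 := by
    rw [abs_of_pos (inv_pos.2 hD), inv_mul_le_one₀ hD]
    exact le_add_of_nonneg_left (by positivity)
  have hDV : D⁻¹ ^ 2 * V ≤ p := by
    have : √V * D⁻¹ ≤ √p := by
      rw [← div_eq_mul_inv, div_le_iff₀ hD, ← div_le_iff₀' (Real.sqrt_pos.2 hp0)]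
      exact le_add_of_nonneg_right hU.le
    calc D⁻¹ ^ 2 * V = (√V * D⁻¹) ^ 2 := by rw [mul_pow, Real.sq_sqrt hV, mul_comm]
      _ ≤ √p ^ 2 := by gcongr
      _ = p := Real.sq_sqrt hp0.le
  have hexp : ∫ ω, exp (D⁻¹ * |(∑ i, Z i) ω|) ∂μ ≤ 2 * exp p :=
    (hindep.integral_exp_mul_abs_sum_le hmeas hmean hbdd _ hDU).trans (by gcongr)
  have hint := hindep.integrable_exp_mul_sum_of_abs_le hmeas hbdd Finset.univ
  calc (∫ ω, |∑ i, Z i ω| ^ p ∂μ) ^ (1 / p) ≤ 2 * p / D⁻¹ := by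
        simpa only [Finset.sum_apply] using moment_le_of_integral_exp_mul_abs_le (inv_pos.2 hD) hp
          (integrable_exp_mul_abs (hint D⁻¹) (hint (-D⁻¹))) hexp
    _ ≤ √(6 * p) * √V + 10 * p * U := by
        rw [div_inv_eq_mul]
        exact two_mul_mul_div_sqrt_add_le (Real.sqrt_nonneg V) hp0 hU.le
end

section
/- Let ξ be a nonnegative real-valued random variable such that P(ξ > x) ≤ A·exp(−x^α/B^α) for all x ≥ 0, for some constants A, B, α > 0. Then for every t ≥ max{(6/α)^{1/α}, 1}·B: if 0 < α ≤ 2, then E[ξ³·1{ξ ≥ t}] ≤ ((6+α)/α)·A·t³·exp(−t^α/B^α); and if α ≥ 2, then E[ξ³·1{ξ ≥ t}] ≤ 4·A·t³·exp(−t²/B²). -/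
open MeasureTheory ProbabilityTheory ENNReal

/-!
By the layer-cake formula, `E[ξ³; ξ ≥ t] = t³ P(ξ ≥ t) + ∫_t^∞ 3 s² P(ξ > s) ds`, and the tail
bound passes from `P(ξ > x)` to `P(ξ ≥ t)` by left continuity. For the integral,
`F(s) = s³ e^{-(s/B)^α}` satisfies `-F'(s) = s² e^{-(s/B)^α} (α (s/B)^α - 3) ≥ κ s² e^{-(s/B)^α}`
for `s ≥ t`, where `κ = α (t/B)^α - 3 > 0`, so the integral is at most `3 A F(t) / κ`; and
`3 / κ ≤ 6 / α` because `α (t/B)^α ≥ 6` and `(t/B)^α ≥ 1`. For `α ≥ 2` one has `(6 + α)/α ≤ 4`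
and `(t/B)^α ≥ (t/B)^2`.
-/

open MeasureTheory Set Filter Topology Real

theorem lintegral_Ioi_le_of_hasDerivAt {f g g' : ℝ → ℝ} {a : ℝ}
    (hderiv : ∀ x ∈ Ici a, HasDerivAt g (g' x) x) (hf : ∀ x ∈ Ioi a, 0 ≤ f x)
    (hfg : ∀ x ∈ Ioi a, f x ≤ -g' x) (hg : Tendsto g atTop (𝓝 0)) :
    ∫⁻ x in Ioi a, ENNReal.ofReal (f x) ≤ ENNReal.ofReal (g a) := by
  have hg' : ∀ x ∈ Ioi a, g' x ≤ 0 := fun x hx => by linarith [hf x hx, hfg x hx]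
  have hint : IntegrableOn (fun x => -g' x) (Ioi a) :=
    (integrableOn_Ioi_deriv_of_nonpos' hderiv hg' hg).neg
  calc ∫⁻ x in Ioi a, ENNReal.ofReal (f x)
      ≤ ∫⁻ x in Ioi a, ENNReal.ofReal (-g' x) :=
        setLIntegral_mono' measurableSet_Ioi fun x hx => ENNReal.ofReal_le_ofReal (hfg x hx)
    _ = ENNReal.ofReal (g a) := by
        rw [← ofReal_integral_eq_lintegral_ofReal hint ((ae_restrict_iff' measurableSet_Ioi).2
            (.of_forall fun x hx => neg_nonneg.2 (hg' x hx))),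
          integral_neg, integral_Ioi_of_hasDerivAt_of_nonpos' hderiv hg' hg, zero_sub, neg_neg]

theorem measure_le_le_of_measure_lt_le {Ω : Type*} [MeasurableSpace Ω] {μ : Measure Ω}
    {ξ : Ω → ℝ} {f : ℝ → ℝ} {t : ℝ} (hf : ContinuousWithinAt f (Iio t) t)
    (h : ∀ᶠ x in 𝓝[<] t, μ {ω | x < ξ ω} ≤ ENNReal.ofReal (f x)) :
    μ {ω | t ≤ ξ ω} ≤ ENNReal.ofReal (f t) := by
  refine ge_of_tendsto (ENNReal.continuous_ofReal.continuousAt.comp_continuousWithinAt hf) ?_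
  filter_upwards [h, self_mem_nhdsWithin] with x hx hxt
  exact (measure_mono fun ω (hω : t ≤ ξ ω) => hxt.out.trans_le hω).trans hx

theorem lintegral_Ioo_ofReal_pow_mul (n : ℕ) {t : ℝ} (ht : 0 ≤ t) :
    ∫⁻ s in Ioo 0 t, ENNReal.ofReal ((n + 1) * s ^ n) = ENNReal.ofReal (t ^ (n + 1)) := by
  rw [← ofReal_integral_eq_lintegral_ofReal, ← integral_Ioc_eq_integral_Ioo,
    ← intervalIntegral.integral_of_le ht, intervalIntegral.integral_const_mul, integral_pow]
  · field_simp; simp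
  · exact (continuous_const.mul (continuous_pow n)).integrableOn_Icc.mono_set Ioo_subset_Icc_self
  · filter_upwards [ae_restrict_mem measurableSet_Ioo] with s hs
    have := hs.1.le
    positivity

theorem setLIntegral_pow_succ_eq {Ω : Type*} [MeasurableSpace Ω] (μ : Measure Ω)
    {ξ : Ω → ℝ} (hmeas : Measurable ξ) (hpos : ∀ ω, 0 ≤ ξ ω) {t : ℝ} (ht : 0 < t) (n : ℕ) :
    ∫⁻ ω in {ω | t ≤ ξ ω}, ENNReal.ofReal (ξ ω ^ (n + 1)) ∂μ =
      ENNReal.ofReal (t ^ (n + 1)) * μ {ω | t ≤ ξ ω} +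
        ∫⁻ s in Ioi t, μ {ω | s < ξ ω} * ENNReal.ofReal ((n + 1) * s ^ n) := by
  set S := {ω | t ≤ ξ ω}
  have hS : MeasurableSet S := measurableSet_le measurable_const hmeas
  set Y := S.indicator ξ
  have hpow : ∀ y, y ^ (n + 1) = ∫ s in (0 : ℝ)..y, (n + 1) * s ^ n := fun y => by
    rw [intervalIntegral.integral_const_mul, integral_pow]; field_simp; simp
  have hlayer := lintegral_comp_eq_lintegral_meas_lt_mul μ (g := fun s => (n + 1) * s ^ n)
    (.of_forall fun ω => indicator_nonneg (fun ω _ => hpos ω) ω)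
    (hmeas.indicator hS).aemeasurable
    (fun u _ => (continuous_const.mul (continuous_pow n)).intervalIntegrable 0 u)
    ((ae_restrict_iff' measurableSet_Ioi).2 (.of_forall fun s (hs : 0 < s) => by positivity))
  have hlhs : ∫⁻ ω in S, ENNReal.ofReal (ξ ω ^ (n + 1)) ∂μ =
      ∫⁻ ω, ENNReal.ofReal (∫ s in (0 : ℝ)..Y ω, (n + 1) * s ^ n) ∂μ := by
    rw [← lintegral_indicator hS]
    congr 1 with ω
    by_cases hω : ω ∈ S <;> simp [Y, hω, ← hpow]
  have hbelow : ∀ s ∈ Ioo 0 t, {ω | s < Y ω} = S := fun s hs => by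
    ext ω
    by_cases hω : ω ∈ S
    · simpa [Y, hω] using hs.2.trans_le hω
    · simp [Y, hω, hs.1.not_gt]
  have habove : ∀ s ∈ Ici t, {ω | s < Y ω} = {ω | s < ξ ω} := fun s hs => by
    ext ω
    by_cases hω : ω ∈ S
    · simp [Y, hω]
    · have hξ : ξ ω < t := not_le.1 hω
      simp [Y, hω, (ht.trans_le hs).not_gt, hs.trans' hξ.le]
  rw [hlhs, hlayer, ← Ioo_union_Ici_eq_Ioi ht,
    lintegral_union measurableSet_Ici ((Iio_disjoint_Ici le_rfl).mono_left Ioo_subset_Iio_self),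
    setLIntegral_congr_fun measurableSet_Ioo fun s hs => by rw [hbelow s hs],
    setLIntegral_congr_fun measurableSet_Ici fun s hs => by rw [habove s hs],
    lintegral_const_mul _ (by fun_prop), lintegral_Ioo_ofReal_pow_mul n ht.le, mul_comm,
    setLIntegral_congr Ioi_ae_eq_Ici]

theorem hasDerivAt_pow_mul_exp_neg_rpow_div (n : ℕ) (α B : ℝ) {s : ℝ} (hs : 0 < s) :
    HasDerivAt (fun x => x ^ (n + 1) * exp (-(x ^ α / B ^ α)))
      (s ^ n * exp (-(s ^ α / B ^ α)) * ((n + 1) - α * s ^ α / B ^ α)) s := by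
  have hrpow := (((hasDerivAt_rpow_const (p := α) (Or.inl hs.ne')).div_const (B ^ α)).neg).exp
  refine ((hasDerivAt_pow (n + 1) s).mul hrpow).congr_deriv ?_
  have : s ^ (α - 1) = s ^ α / s := rpow_sub_one hs.ne' α
  simp only [Pi.neg_apply, this]
  field_simp
  push_cast
  ring

theorem tendsto_pow_mul_exp_neg_rpow_div (n : ℕ) {α B : ℝ} (hα : 0 < α) (hB : 0 < B) :
    Tendsto (fun x => x ^ (n + 1) * exp (-(x ^ α / B ^ α))) atTop (𝓝 0) := by
  have hy : Tendsto (fun x : ℝ => x ^ α / B ^ α) atTop atTop :=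
    (tendsto_rpow_atTop hα).atTop_div_const (rpow_pos_of_pos hB α)
  have hlim := ((tendsto_rpow_mul_exp_neg_mul_atTop_nhds_zero ((n + 1) / α) 1 one_pos).comp
    hy).const_mul (B ^ (n + 1))
  rw [mul_zero] at hlim
  -- `x ^ (n + 1) = B ^ (n + 1) * y ^ ((n + 1) / α)` for `y = x ^ α / B ^ α`
  refine hlim.congr' ?_
  filter_upwards [eventually_gt_atTop 0] with x hx
  simp only [Function.comp_apply, neg_mul, one_mul]
  rw [div_rpow (rpow_nonneg hx.le α) (rpow_nonneg hB.le α), ← rpow_mul hx.le, ← rpow_mul hB.le,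
    mul_div_cancel₀ _ hα.ne', ← Nat.cast_add_one, Real.rpow_natCast, Real.rpow_natCast]
  field_simp

theorem lintegral_Ioi_pow_mul_exp_neg_rpow_div_le (n : ℕ) {α B t : ℝ} (hα : 0 < α)
    (hB : 0 < B) (ht : 0 < t) (hκ : n + 1 < α * t ^ α / B ^ α) :
    ∫⁻ s in Ioi t, ENNReal.ofReal (s ^ n * exp (-(s ^ α / B ^ α))) ≤
      ENNReal.ofReal
        (t ^ (n + 1) * exp (-(t ^ α / B ^ α)) / (α * t ^ α / B ^ α - (n + 1))) := by
  set κ := α * t ^ α / B ^ α - (n + 1)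
  have hκ0 : 0 < κ := sub_pos.2 hκ
  refine lintegral_Ioi_le_of_hasDerivAt
    (fun x hx => (hasDerivAt_pow_mul_exp_neg_rpow_div n α B (ht.trans_le hx)).div_const κ)
    (fun x hx => by have := (ht.trans hx).le; positivity) (fun x hx => ?_)
    (by simpa using (tendsto_pow_mul_exp_neg_rpow_div n hα hB).div_const κ)
  have hmono : α * t ^ α / B ^ α ≤ α * x ^ α / B ^ α := by
    gcongr
    exact hx.out.le
  have hf : 0 ≤ x ^ n * exp (-(x ^ α / B ^ α)) := by have := (ht.trans hx).le; positivity
  rw [le_neg, div_le_iff₀ hκ0]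
  nlinarith

theorem lintegral_Ioi_measure_lt_mul_le_of_measure_lt_le_exp {Ω : Type*} [MeasurableSpace Ω]
    {μ : Measure Ω} {ξ : Ω → ℝ} (n : ℕ) {A B α t : ℝ} (hA : 0 ≤ A) (hB : 0 < B)
    (hα : 0 < α) (ht : 0 < t)
    (htail : ∀ x : ℝ, 0 ≤ x → μ {ω | x < ξ ω} ≤ ENNReal.ofReal (A * exp (-(x ^ α / B ^ α))))
    (hκ : n + 1 < α * t ^ α / B ^ α) :
    ∫⁻ s in Ioi t, μ {ω | s < ξ ω} * ENNReal.ofReal ((n + 1) * s ^ n) ≤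
      ENNReal.ofReal ((n + 1) * A *
        (t ^ (n + 1) * exp (-(t ^ α / B ^ α)) / (α * t ^ α / B ^ α - (n + 1)))) := by
  calc ∫⁻ s in Ioi t, μ {ω | s < ξ ω} * ENNReal.ofReal ((n + 1) * s ^ n)
      ≤ ∫⁻ s in Ioi t, ENNReal.ofReal ((n + 1) * A) *
          ENNReal.ofReal (s ^ n * exp (-(s ^ α / B ^ α))) := by
        refine setLIntegral_mono' measurableSet_Ioi fun s hs => ?_
        have hs := ht.trans hs
        calc μ {ω | s < ξ ω} * ENNReal.ofReal ((n + 1) * s ^ n)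
            ≤ ENNReal.ofReal (A * exp (-(s ^ α / B ^ α))) *
                ENNReal.ofReal ((n + 1) * s ^ n) := by
              gcongr
              exact htail s hs.le
          _ = _ := by
              rw [← ENNReal.ofReal_mul (by positivity), ← ENNReal.ofReal_mul (by positivity)]
              ring_nf
    _ ≤ _ := by
        rw [lintegral_const_mul _ (by fun_prop),
          ENNReal.ofReal_mul (p := (n + 1) * A) (by positivity)]
        gcongr
        exact lintegral_Ioi_pow_mul_exp_neg_rpow_div_le n hα hB ht hκ

theorem setLIntegral_pow_succ_le_of_measure_lt_le_exp {Ω : Type*} [MeasurableSpace Ω]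
    {μ : Measure Ω} {ξ : Ω → ℝ} (n : ℕ) (hmeas : Measurable ξ) (hpos : ∀ ω, 0 ≤ ξ ω)
    {A B α t : ℝ} (hA : 0 ≤ A) (hB : 0 < B) (hα : 0 < α) (ht : 0 < t)
    (htail : ∀ x : ℝ, 0 ≤ x → μ {ω | x < ξ ω} ≤ ENNReal.ofReal (A * exp (-(x ^ α / B ^ α))))
    (hκ : n + 1 < α * t ^ α / B ^ α) :
    ∫⁻ ω in {ω | t ≤ ξ ω}, ENNReal.ofReal (ξ ω ^ (n + 1)) ∂μ ≤
      ENNReal.ofReal ((1 + (n + 1) / (α * t ^ α / B ^ α - (n + 1))) * A * t ^ (n + 1) *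
        exp (-(t ^ α / B ^ α))) := by
  have hμS : μ {ω | t ≤ ξ ω} ≤ ENNReal.ofReal (A * exp (-(t ^ α / B ^ α))) :=
    measure_le_le_of_measure_lt_le
      (show Continuous fun x : ℝ => A * exp (-(x ^ α / B ^ α)) by
        fun_prop (disch := exact hα.le)).continuousWithinAt
      (by filter_upwards [Ioo_mem_nhdsLT ht] with x hx using htail x hx.1.le)
  have hκ0 : 0 ≤ α * t ^ α / B ^ α - (n + 1) := by linarith
  rw [setLIntegral_pow_succ_eq μ hmeas hpos ht n]
  calc ENNReal.ofReal (t ^ (n + 1)) * μ {ω | t ≤ ξ ω} +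
        ∫⁻ s in Ioi t, μ {ω | s < ξ ω} * ENNReal.ofReal ((n + 1) * s ^ n)
      ≤ ENNReal.ofReal (t ^ (n + 1)) * ENNReal.ofReal (A * exp (-(t ^ α / B ^ α))) +
          ENNReal.ofReal ((n + 1) * A *
            (t ^ (n + 1) * exp (-(t ^ α / B ^ α)) / (α * t ^ α / B ^ α - (n + 1)))) := by
        gcongr
        exact lintegral_Ioi_measure_lt_mul_le_of_measure_lt_le_exp n hA hB hα ht htail hκ
    _ = _ := by
        rw [← ENNReal.ofReal_mul (by positivity), ← ENNReal.ofReal_add (by positivity)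
          (by positivity)]
        congr 1
        ring

theorem le_rpow_div_rpow_of_rpow_inv_mul_le {c B t α : ℝ} (hc : 0 ≤ c) (hB : 0 < B)
    (hα : 0 < α) (h : c ^ (1 / α) * B ≤ t) : c ≤ t ^ α / B ^ α := by
  rw [le_div_iff₀ (rpow_pos_of_pos hB α)]
  calc c * B ^ α = (c ^ (1 / α) * B) ^ α := by
        rw [mul_rpow (by positivity) hB.le, ← rpow_mul hc, one_div_mul_cancel hα.ne',
          Real.rpow_one]
    _ ≤ t ^ α := rpow_le_rpow (by positivity) h hα.le

theorem one_add_three_div_le {α u : ℝ} (hα : 0 < α) (hu1 : 1 ≤ u) (hu6 : 6 / α ≤ u) :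
    1 + 3 / (α * u - 3) ≤ (6 + α) / α := by
  have h6 : 6 ≤ α * u := (div_le_iff₀' hα).1 hu6
  rw [one_add_div (by linarith), div_le_div_iff₀ (by linarith) hα]
  nlinarith

theorem exp_neg_rpow_div_le_exp_neg_sq_div {B t α : ℝ} (hB : 0 < B) (hBt : B ≤ t)
    (hα : 2 ≤ α) :
    exp (-(t ^ α / B ^ α)) ≤ exp (-(t ^ 2 / B ^ 2)) := by
  have ht : 0 < t := hB.trans_le hBt
  have h := rpow_le_rpow_of_exponent_le ((one_le_div hB).2 hBt) hα
  rw [div_rpow ht.le hB.le, div_rpow ht.le hB.le, Real.rpow_two, Real.rpow_two] at h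
  gcongr

theorem truncated_third_moment_bound_general {Ω : Type*} [MeasurableSpace Ω] (μ : Measure Ω)
    (ξ : Ω → ℝ) (hmeas : Measurable ξ) (hpos : ∀ ω, 0 ≤ ξ ω)
    (A B α : ℝ) (hA : 0 < A) (hB : 0 < B) (hα : 0 < α)
    (htail : ∀ x : ℝ, 0 ≤ x →
      μ {ω | x < ξ ω} ≤ ENNReal.ofReal (A * Real.exp (-(x ^ α / B ^ α)))) :
    ∀ t : ℝ, max ((6 / α) ^ (1 / α)) 1 * B ≤ t →
      (α ≤ 2 →
        ∫ ω in {ω | t ≤ ξ ω}, ξ ω ^ 3 ∂μ ≤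
          (6 + α) / α * A * t ^ 3 * Real.exp (-(t ^ α / B ^ α))) ∧
      (2 ≤ α →
        ∫ ω in {ω | t ≤ ξ ω}, ξ ω ^ 3 ∂μ ≤
          4 * A * t ^ 3 * Real.exp (-(t ^ 2 / B ^ 2))) := by
  intro t ht
  have hBt : B ≤ t := (le_mul_of_one_le_left hB.le (le_max_right _ _)).trans ht
  have ht0 : 0 < t := hB.trans_le hBt
  have hu6 : 6 / α ≤ t ^ α / B ^ α := le_rpow_div_rpow_of_rpow_inv_mul_le (by positivity) hB hα
    ((mul_le_mul_of_nonneg_right (le_max_left _ _) hB.le).trans ht)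
  have hu1 : 1 ≤ t ^ α / B ^ α := le_rpow_div_rpow_of_rpow_inv_mul_le zero_le_one hB hα
    (by simpa using hBt)
  have hκ : ((2 : ℕ) : ℝ) + 1 < α * t ^ α / B ^ α := by
    push_cast; rw [mul_div_assoc]; linarith [(div_le_iff₀' hα).1 hu6]
  have hbound : ∫ ω in {ω | t ≤ ξ ω}, ξ ω ^ 3 ∂μ ≤
      (6 + α) / α * A * t ^ 3 * exp (-(t ^ α / B ^ α)) := by
    rw [integral_eq_lintegral_of_nonneg_ae (.of_forall fun ω => pow_nonneg (hpos ω) 3)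
      (hmeas.pow_const 3).aestronglyMeasurable]
    refine ENNReal.toReal_le_of_le_ofReal (by positivity)
      ((setLIntegral_pow_succ_le_of_measure_lt_le_exp 2 hmeas hpos hA.le hB hα ht0 htail hκ).trans
        (ENNReal.ofReal_le_ofReal ?_))
    rw [mul_div_assoc]
    norm_num
    gcongr
    exact one_add_three_div_le hα hu1 hu6
  refine ⟨fun _ => hbound, fun h2 => hbound.trans ?_⟩
  have hconst : (6 + α) / α ≤ 4 := by rw [div_le_iff₀ hα]; linarith
  calc (6 + α) / α * A * t ^ 3 * exp (-(t ^ α / B ^ α))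
      ≤ 4 * A * t ^ 3 * exp (-(t ^ α / B ^ α)) := by gcongr
    _ ≤ 4 * A * t ^ 3 * exp (-(t ^ 2 / B ^ 2)) :=
        mul_le_mul_of_nonneg_left (exp_neg_rpow_div_le_exp_neg_sq_div hB hBt h2) (by positivity)

/-- Truncated third-moment bound for a nonnegative random variable with
Weibull-type tail `P(ξ > x) ≤ A exp(−x^α/B^α)`: for every
`t ≥ max{(6/α)^{1/α}, 1} B`, if `0 < α ≤ 2` then
`E[ξ³ 1{ξ ≥ t}] ≤ ((6+α)/α) A t³ exp(−t^α/B^α)`, and if `α ≥ 2` then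
`E[ξ³ 1{ξ ≥ t}] ≤ 4 A t³ exp(−t²/B²)`. -/
theorem truncated_third_moment_bound {Ω : Type*} [MeasurableSpace Ω] (μ : Measure Ω)
    [IsProbabilityMeasure μ] (ξ : Ω → ℝ) (hmeas : Measurable ξ) (hpos : ∀ ω, 0 ≤ ξ ω)
    (A B α : ℝ) (hA : 0 < A) (hB : 0 < B) (hα : 0 < α)
    (htail : ∀ x : ℝ, 0 ≤ x →
      μ {ω | x < ξ ω} ≤ ENNReal.ofReal (A * Real.exp (-(x ^ α / B ^ α)))) :
    ∀ t : ℝ, max ((6 / α) ^ (1 / α)) 1 * B ≤ t →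
      (α ≤ 2 →
        ∫ ω in {ω | t ≤ ξ ω}, ξ ω ^ 3 ∂μ ≤
          (6 + α) / α * A * t ^ 3 * Real.exp (-(t ^ α / B ^ α))) ∧
      (2 ≤ α →
        ∫ ω in {ω | t ≤ ξ ω}, ξ ω ^ 3 ∂μ ≤
          4 * A * t ^ 3 * Real.exp (-(t ^ 2 / B ^ 2))) :=
  truncated_third_moment_bound_general μ ξ hmeas hpos A B α hA hB hα htail
end
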